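/- Let (a,p) ∈ P^{2N}, let G be a DC graph on {1,...,N}, and let s^{(0)}, s^{(1)} ∈ ℝ^N satisfy, with the convention s^{(m)}(0) := 0, 0 < s^{(0)}(i) − s^{(0)}(i−1) ≤ s^{(1)}(i) − s^{(1)}(i−1) for every i ∈ {1,...,N}. Then T(G)(s^{(0)})(i) ≤ T(G)(s^{(1)})(i) for every i ∈ {1,...,N}, and moreover ‖T(G)(s^{(1)}) − T(G)(s^{(0)})‖_∞ ≤ (1 − q_1/q_N)·‖s^{(1)} − s^{(0)}‖_∞, where ‖·‖_∞ is the sup norm on ℝ^N. -/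

import Mathlib

open Filter Topology
open scoped Classical

noncomputable section

/-- The positive part `x₊ = max x 0` of a real number. -/
def pos' (x : ℝ) : ℝ := max x 0

/-- `qq p i = p 1 + ... + p i` (so `qq p 0 = 0`). -/
def qq (p : ℕ → ℝ) (i : ℕ) : ℝ := ∑ j ∈ Finset.Icc 1 i, p j

/-- `dpar a i = a i - a (i-1)`, with the convention `a 0 = 0`. -/
def dpar (a : ℕ → ℝ) (i : ℕ) : ℝ := if i = 1 then a 1 else a i - a (i - 1)

/-- `(a, p)` is a parameter tuple in `P^{2N}`:
`0 < a 1 < a 2 < ... < a N` and `p 1, ..., p N > 0`. -/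
def IsParam (N : ℕ) (a p : ℕ → ℝ) : Prop :=
  0 < a 1 ∧ (∀ i, 1 ≤ i → i < N → a i < a (i + 1)) ∧ (∀ i, 1 ≤ i → i ≤ N → 0 < p i)

/-- `s` is a stationary tuple for the parameters `(a, p)`:
`0 < s 1 < ... < s N` and `a i = ∑_{j=1}^N p j * (s i - s j + s 1)₊` for `1 ≤ i ≤ N`. -/
def IsStationary' (N : ℕ) (a p s : ℕ → ℝ) : Prop :=
  0 < s 1 ∧ (∀ i, 1 ≤ i → i < N → s i < s (i + 1)) ∧
  ∀ i, 1 ≤ i → i ≤ N → a i = ∑ j ∈ Finset.Icc 1 N, p j * pos' (s i - s j + s 1)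

/-- The inverse of (the restriction to `[0, ∞)` of) a function `y : ℝ → ℝ`. -/
def tinv (y : ℝ → ℝ) (x : ℝ) : ℝ := Function.invFunOn y (Set.Ici 0) x

/-- The right derivative of `y` at `t` (the derivative of `y` at `t` within `[t, ∞)`). -/
def rD (y : ℝ → ℝ) (t : ℝ) : ℝ := derivWithin y (Set.Ici t) t

/-- The sequence `(y k)` satisfies recurrence (R).  The condition on the initial function `y 0`
(continuous, piecewise linear with at most `N` points of non-differentiability, vanishing at `0`,
with non-decreasing right derivative taking values in `{q 1, ..., q N}`) is encoded through its
canonical representation: such functions are exactly those of the form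
`t ↦ ∑_{j=1}^N p j * (t - c j)₊` with `c` non-negative, non-decreasing and `c 1 = 0`. -/
def SatisfiesR (N : ℕ) (a p : ℕ → ℝ) (y : ℕ → ℝ → ℝ) : Prop :=
  (∃ c : ℕ → ℝ, c 1 = 0 ∧ (∀ j, 1 ≤ j → j ≤ N → 0 ≤ c j) ∧
      (∀ j, 1 ≤ j → j < N → c j ≤ c (j + 1)) ∧
      ∀ t : ℝ, 0 ≤ t → y 0 t = ∑ j ∈ Finset.Icc 1 N, p j * pos' (t - c j)) ∧
  ∀ k : ℕ, ∀ t : ℝ, 0 ≤ t →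
    y (k + 1) t = ∑ j ∈ Finset.Icc 1 N, p j * pos' (t - tinv (y k) (a j) + tinv (y k) (a 1))

/-- The breakpoints `c j` of the lower bounding trajectory `y₀⁻`:
`c 1 = 0` and `c j = d 1 / q 1 + ∑_{l=2}^j d l / q (l-1)` for `j ≥ 2`. -/
def cminus (a p : ℕ → ℝ) (j : ℕ) : ℝ :=
  if j ≤ 1 then 0
  else a 1 / qq p 1 + ∑ l ∈ Finset.Icc 2 j, (a l - a (l - 1)) / qq p (l - 1)

/-- The lower bounding initial trajectory `y₀⁻`. -/
def yminus0 (N : ℕ) (a p : ℕ → ℝ) : ℝ → ℝ :=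
  fun t => ∑ j ∈ Finset.Icc 1 N, p j * pos' (t - cminus a p j)

/-- The upper bounding initial trajectory `y₀⁺ : t ↦ q N * t`. -/
def yplus0 (N : ℕ) (p : ℕ → ℝ) : ℝ → ℝ := fun t => qq p N * t

/-- The sequence satisfying recurrence (R) with prescribed initial term `y0`. -/
def iterR (N : ℕ) (a p : ℕ → ℝ) (y0 : ℝ → ℝ) : ℕ → ℝ → ℝ
  | 0 => y0
  | k + 1 => fun t =>
      ∑ j ∈ Finset.Icc 1 N,
        p j * pos' (t - tinv (iterR N a p y0 k) (a j) + tinv (iterR N a p y0 k) (a 1))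

/-- `y` is a stationary trajectory: an increasing bijection of `[0,∞)` satisfying the
fixed-point equation of recurrence (R). -/
def IsStatTraj (N : ℕ) (a p : ℕ → ℝ) (y : ℝ → ℝ) : Prop :=
  StrictMonoOn y (Set.Ici 0) ∧ Set.BijOn y (Set.Ici 0) (Set.Ici 0) ∧
  ∀ t : ℝ, 0 ≤ t → y t = ∑ j ∈ Finset.Icc 1 N, p j * pos' (t - tinv y (a j) + tinv y (a 1))

/-- `E_N`: the set of pairs `(i, j)` with `1 ≤ i < j ≤ N`. -/
def ENfin (N : ℕ) : Finset (ℕ × ℕ) :=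
  (Finset.Icc 1 N ×ˢ Finset.Icc 1 N).filter fun e => e.1 < e.2

/-- `Nested e e'` means `e ≼_E e'`, i.e. `e` is nested in `e'`. -/
def Nested (e e' : ℕ × ℕ) : Prop := e'.1 ≤ e.1 ∧ e.1 < e.2 ∧ e.2 ≤ e'.2

/-- `E` is the edge set of a downward closed graph on `{1, ..., N}`. -/
def IsDCGraph (N : ℕ) (E : Finset (ℕ × ℕ)) : Prop :=
  E ⊆ ENfin N ∧ ∀ e ∈ E, ∀ e' : ℕ × ℕ, Nested e' e → e' ∈ E

/-- `bG E i` is the greatest `j > i` with `(i, j) ∈ E`, and `i` if there is no such `j`;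
by convention `bG E 0 = 1`. -/
def bG (E : Finset (ℕ × ℕ)) (i : ℕ) : ℕ :=
  if i = 0 then 1 else max i ((E.filter fun e => e.1 = i).sup fun e => e.2)

/-- `m(G)`: the maximal elements of `E` for `≼_E`. -/
def maxE (E : Finset (ℕ × ℕ)) : Finset (ℕ × ℕ) :=
  E.filter fun e => ∀ e' ∈ E, Nested e e' → e' = e

/-- `M(G)`: the minimal elements of `E_N \ E` for `≼_E`. -/
def minNE (N : ℕ) (E : Finset (ℕ × ℕ)) : Finset (ℕ × ℕ) :=
  (ENfin N \ E).filter fun e => ∀ e' ∈ ENfin N \ E, Nested e' e → e' = e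

/-- The map `T(G) : ℝ^N → ℝ^N`. -/
def TG (a p : ℕ → ℝ) (E : Finset (ℕ × ℕ)) (s : ℕ → ℝ) (i : ℕ) : ℝ :=
  (1 / qq p (bG E i)) * (a i + ∑ j ∈ Finset.Icc 1 (bG E i), p j * (s j - s 1))

/-- The product of `γ` over the consecutive pairs (edges) of a list of vertices. -/
def pathProd (γ : ℕ → ℕ → ℝ) (l : List ℕ) : ℝ := (List.zipWith γ l l.tail).prod

/-- `Γ i j`: the sum, over all directed paths from `i` to `j` using edges of `E`, of the
product of `γ` over the edges of the path.  Since all edges of a DC graph increase, a directed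
path from `i` to `j` is identified with the set `S ⊆ (i, j)` of its intermediate vertices,
subject to consecutive vertices being joined by edges of `E`. -/
def GammaPath (E : Finset (ℕ × ℕ)) (γ : ℕ → ℕ → ℝ) (i j : ℕ) : ℝ :=
  if i = j then 1
  else if i < j then
    ∑ S ∈ (Finset.Ioo i j).powerset,
      if List.Chain' (fun u v => (u, v) ∈ E) (Finset.sort (insert i (insert j S)) (· ≤ ·))
      then pathProd γ (Finset.sort (insert i (insert j S)) (· ≤ ·)) else 0
  else 0

/-- The edge weight `γ^G_{i,j}`. -/
def gammaG (p : ℕ → ℝ) (E : Finset (ℕ × ℕ)) (i j : ℕ) : ℝ :=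
  (qq p (bG E i) - qq p (max (j - 1) (bG E (i - 1)))) / qq p (bG E (i - 1))

/-- `Γ^G_{i,j}`. -/
def GammaG (p : ℕ → ℝ) (E : Finset (ℕ × ℕ)) (i j : ℕ) : ℝ := GammaPath E (gammaG p E) i j

/-- `z_1^G (a, p)`. -/
def z1G (N : ℕ) (a p : ℕ → ℝ) (E : Finset (ℕ × ℕ)) : ℝ :=
  (∑ j ∈ Finset.Icc 1 N, GammaG p E 1 j * dpar a j / qq p (bG E (j - 1))) /
  (1 + ∑ j ∈ Finset.Icc 1 N,
      GammaG p E 1 j * (qq p (bG E j) - qq p (bG E (j - 1))) / qq p (bG E (j - 1)))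

/-- `z_i^G (a, p)`. -/
def zG (N : ℕ) (a p : ℕ → ℝ) (E : Finset (ℕ × ℕ)) (i : ℕ) : ℝ :=
  if i = 1 then z1G N a p E
  else
    (∑ j ∈ Finset.Icc i N, GammaG p E i j * dpar a j / qq p (bG E (j - 1))) -
      z1G N a p E *
        ∑ j ∈ Finset.Icc i N,
          GammaG p E i j * (qq p (bG E j) - qq p (bG E (j - 1))) / qq p (bG E (j - 1))

/-- `Z^G_{i,j} (a, p) = z_{i+1}^G + ... + z_j^G`. -/
def ZG (N : ℕ) (a p : ℕ → ℝ) (E : Finset (ℕ × ℕ)) (i j : ℕ) : ℝ :=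
  ∑ l ∈ Finset.Icc (i + 1) j, zG N a p E l

/-- The DC graph `Gr(a, p)` read off from the stationary tuple `s = s(a, p)`: its edges are
the pairs `(i, j) ∈ E_N` with `s 1 > s j - s i`. -/
def GrEdges (N : ℕ) (s : ℕ → ℝ) : Finset (ℕ × ℕ) :=
  (ENfin N).filter fun e => s e.2 - s e.1 < s 1

/-- `ζ` solves the linear system `S^G (a, p)`. -/
def SolvesS (N : ℕ) (a p : ℕ → ℝ) (E : Finset (ℕ × ℕ)) (ζ : ℕ → ℝ) : Prop :=
  ∀ i, 1 ≤ i → i ≤ N →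
    a i = ∑ j ∈ Finset.Icc 1 (bG E i),
      p j * ((∑ l ∈ Finset.Icc 1 i, ζ l) - (∑ l ∈ Finset.Icc 1 j, ζ l) + ζ 1)

/-- `P^{2N}`, viewed as a (cylinder) subset of the space of pairs of real sequences; only the
coordinates `a 1, ..., a N, p 1, ..., p N` are constrained. -/
def Pset (N : ℕ) : Set ((ℕ → ℝ) × (ℕ → ℝ)) := {ap | IsParam N ap.1 ap.2}

/-- The region `P_G = {(a, p) ∈ P^{2N} : Gr(a, p) = G}`. -/
def PGset (N : ℕ) (E : Finset (ℕ × ℕ)) : Set ((ℕ → ℝ) × (ℕ → ℝ)) :=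
  {ap | IsParam N ap.1 ap.2 ∧ ∃ s : ℕ → ℝ, IsStationary' N ap.1 ap.2 s ∧ GrEdges N s = E}

/-- The boundary of `P_G` relative to `P^{2N}`.  Since `P^{2N}` is open, the closure of `P_G`
relative to `P^{2N}` is `closure (PGset N E) ∩ Pset N` and its relative interior is
`interior (PGset N E)`. -/
def relBoundary (N : ℕ) (E : Finset (ℕ × ℕ)) : Set ((ℕ → ℝ) × (ℕ → ℝ)) :=
  (closure (PGset N E) ∩ Pset N) \ interior (PGset N E)

/-- The trajectory `y^{(m)}` built from a tuple `s`:
`t ↦ ∑_{j=1}^N p j * (t - s j + s 1)₊`. -/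
def trajOfS (N : ℕ) (p s : ℕ → ℝ) : ℝ → ℝ :=
  fun t => ∑ j ∈ Finset.Icc 1 N, p j * pos' (t - s j + s 1)

/-- The DC graph `G^{(m)}` associated with a tuple `s`: its edges are the `(i, j) ∈ E_N` with
`t^{(m)} (a i) - s j + s 1 > 0`, where `t^{(m)}` is the inverse of `trajOfS N p s`. -/
def GrFromS (N : ℕ) (a p s : ℕ → ℝ) : Finset (ℕ × ℕ) :=
  (ENfin N).filter fun e => 0 < tinv (trajOfS N p s) (a e.1) - s e.2 + s 1

end

/-!
On its `i`-th coordinate `T(G)` is an affine map whose linear part is the weighted average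
`d ↦ q_b⁻¹ ∑_{j ≤ b} p_j (d_j - d_1)` with `b = b_G(i) ≤ N`. The hypothesis makes
`d = s⁽¹⁾ - s⁽⁰⁾` non-decreasing on `{0, …, N}` with `d_0 = 0`, so every summand is non-negative
(monotonicity), while `d_j - d_1 ≤ d_j ≤ ‖d‖_∞` and the term `j = 1` vanishes, which bounds the
average by `(1 - q_1/q_b) ‖d‖_∞ ≤ (1 - q_1/q_N) ‖d‖_∞` (contraction).
-/

open Finset

section qq

variable {p : ℕ → ℝ} {m n : ℕ}

lemma qq_nonneg (hp : ∀ j ∈ Icc 1 n, 0 ≤ p j) : 0 ≤ qq p n :=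
  sum_nonneg hp

lemma qq_pos (hp : ∀ j ∈ Icc 1 n, 0 < p j) (hn : 1 ≤ n) : 0 < qq p n :=
  sum_pos hp (nonempty_Icc.mpr hn)

lemma qq_le_qq (hp : ∀ j ∈ Icc 1 n, 0 ≤ p j) (hmn : m ≤ n) : qq p m ≤ qq p n :=
  sum_le_sum_of_subset_of_nonneg (Icc_subset_Icc_right hmn) fun j hj _ => hp j hj

lemma qq_one_add_sum_Ioc (hn : 1 ≤ n) : qq p 1 + ∑ j ∈ Ioc 1 n, p j = qq p n := by
  simp only [qq, Icc_self, sum_singleton]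
  exact add_sum_Ioc_eq_sum_Icc hn

end qq

section bG

variable {N : ℕ} {E : Finset (ℕ × ℕ)}

lemma one_le_bG (E : Finset (ℕ × ℕ)) (i : ℕ) : 1 ≤ bG E i := by
  unfold bG
  split_ifs with hi
  · exact le_rfl
  · exact le_max_of_le_left (Nat.one_le_iff_ne_zero.mpr hi)

lemma bG_le (hE : E ⊆ ENfin N) (hN : 1 ≤ N) {i : ℕ} (hi : i ≤ N) : bG E i ≤ N := by
  unfold bG
  split_ifs
  · exact hN
  · refine max_le hi (Finset.sup_le fun e he => ?_)
    have he' := hE (mem_filter.mp he).1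
    simp only [ENfin, mem_filter, mem_product, mem_Icc] at he'
    exact he'.1.2.2

end bG

section TG

variable {p : ℕ → ℝ} {E : Finset (ℕ × ℕ)} {i : ℕ}

lemma TG_sub_TG (a : ℕ → ℝ) (s s' : ℕ → ℝ) :
    TG a p E s' i - TG a p E s i = TG 0 p E (s' - s) i := by
  simp only [TG, Pi.zero_apply, Pi.sub_apply, zero_add, ← mul_sub, add_sub_add_left_eq_sub,
    ← sum_sub_distrib]
  congr 1
  exact sum_congr rfl fun j _ => by ring

lemma TG_zero_nonneg {d : ℕ → ℝ} (hp : ∀ j ∈ Icc 1 (bG E i), 0 ≤ p j)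
    (hd : ∀ j ∈ Icc 1 (bG E i), d 1 ≤ d j) : 0 ≤ TG 0 p E d i := by
  unfold TG
  refine mul_nonneg (one_div_nonneg.mpr (qq_nonneg hp)) ?_
  rw [Pi.zero_apply, zero_add]
  exact sum_nonneg fun j hj => mul_nonneg (hp j hj) (sub_nonneg.mpr (hd j hj))

lemma TG_zero_le {d : ℕ → ℝ} {M : ℝ} {n : ℕ} (hbn : bG E i ≤ n) (hp : ∀ j ∈ Icc 1 n, 0 < p j)
    (hd1 : 0 ≤ d 1) (hd : ∀ j ∈ Icc 1 n, d j ≤ M) :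
    TG 0 p E d i ≤ (1 - qq p 1 / qq p n) * M := by
  set b := bG E i
  have hb : 1 ≤ b := one_le_bG E i
  have hpb : ∀ j ∈ Icc 1 b, 0 < p j := fun j hj => hp j (Icc_subset_Icc_right hbn hj)
  have hqb : 0 < qq p b := qq_pos hpb hb
  have hM : 0 ≤ M := hd1.trans (hd 1 (by simp [hb.trans hbn]))
  have hsum : ∑ j ∈ Icc 1 b, p j * (d j - d 1) ≤ (qq p b - qq p 1) * M := by
    rw [← add_sum_Ioc_eq_sum_Icc hb, sub_self, mul_zero, zero_add, ← qq_one_add_sum_Ioc hb,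
      add_sub_cancel_left, sum_mul]
    refine sum_le_sum fun j hj => mul_le_mul_of_nonneg_left ?_ (hpb j (Ioc_subset_Icc_self hj)).le
    linarith [hd j (Icc_subset_Icc_right hbn (Ioc_subset_Icc_self hj))]
  calc TG 0 p E d i = (qq p b)⁻¹ * ∑ j ∈ Icc 1 b, p j * (d j - d 1) := by
        simp only [TG, Pi.zero_apply, zero_add, one_div, b]
    _ ≤ (qq p b)⁻¹ * ((qq p b - qq p 1) * M) := by gcongr
    _ = (1 - qq p 1 / qq p b) * M := by field_simp
    _ ≤ (1 - qq p 1 / qq p n) * M := by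
        gcongr
        · exact qq_nonneg fun j hj => (hpb j (Icc_subset_Icc_right hb hj)).le
        · exact qq_le_qq (fun j hj => (hp j hj).le) hbn

end TG

lemma monotoneOn_sub_of_sub_pred_le {s0 s1 : ℕ → ℝ} {N : ℕ}
    (h : ∀ i, 1 ≤ i → i ≤ N → s0 i - s0 (i - 1) ≤ s1 i - s1 (i - 1)) :
    MonotoneOn (s1 - s0) (Set.Icc 0 N) :=
  monotoneOn_of_le_add_one Set.ordConnected_Icc fun n _ _ hn => by
    have := h (n + 1) n.succ_pos hn.2
    simp only [Nat.add_sub_cancel] at this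
    simp only [Pi.sub_apply]
    linarith

/-- the map `T(G)` is monotone and contracting, Lemma 3.9. -/
theorem stmt_6 (N : ℕ) (hN : 1 ≤ N) (a p : ℕ → ℝ) (hap : IsParam N a p)
    (E : Finset (ℕ × ℕ)) (hE : IsDCGraph N E)
    (s0 s1 : ℕ → ℝ) (h00 : s0 0 = 0) (h10 : s1 0 = 0)
    (hss : ∀ i, 1 ≤ i → i ≤ N →
      0 < s0 i - s0 (i - 1) ∧ s0 i - s0 (i - 1) ≤ s1 i - s1 (i - 1)) :
    (∀ i, 1 ≤ i → i ≤ N → TG a p E s0 i ≤ TG a p E s1 i) ∧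
    ∀ i, 1 ≤ i → i ≤ N →
      |TG a p E s1 i - TG a p E s0 i| ≤
        (1 - qq p 1 / qq p N) *
          (Finset.Icc 1 N).sup' (Finset.nonempty_Icc.mpr hN) (fun j => |s1 j - s0 j|) := by
  obtain ⟨-, -, hp⟩ := hap
  have hpN : ∀ j ∈ Icc 1 N, 0 < p j := fun j hj => hp j (mem_Icc.mp hj).1 (mem_Icc.mp hj).2
  have hd := monotoneOn_sub_of_sub_pred_le fun i hi hiN => (hss i hi hiN).2
  have hd1 : 0 ≤ (s1 - s0) 1 := by
    simpa [h00, h10] using hd (by simp) (by simp [hN]) zero_le_one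
  have hb {i} (hi : i ≤ N) : bG E i ≤ N := bG_le hE.1 hN hi
  have hnonneg {i} (hi : i ≤ N) : 0 ≤ TG a p E s1 i - TG a p E s0 i := by
    rw [TG_sub_TG]
    refine TG_zero_nonneg (fun j hj => (hpN j (Icc_subset_Icc_right (hb hi) hj)).le) fun j hj => ?_
    exact hd (by simp [hN]) (by simp [(mem_Icc.mp hj).2.trans (hb hi)]) (mem_Icc.mp hj).1
  refine ⟨fun i _ hi => sub_nonneg.mp (hnonneg hi), fun i _ hi => ?_⟩
  rw [abs_of_nonneg (hnonneg hi), TG_sub_TG]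
  exact TG_zero_le (hb hi) hpN hd1 fun j hj =>
    (le_abs_self _).trans (le_sup' (fun j => |s1 j - s0 j|) hj)
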